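/- arXiv:1311.0627 — 10 statements merged into one kernel-verified Lean document; each statement's English description precedes it below -/
import Mathlib

section
/- Let q, h, a : ℝ → ℝ³ be smooth unit vector fields forming an orthonormal frame satisfying the Frenet-type equations q' = k₁·h, h' = -k₁·q + k₂·a, a' = -k₂·h for smooth functions k₁, k₂ with k₂ nowhere zero. If there exists a nonzero constant vector u and a constant c with ⟪q s, u⟫ = c for all s, then the function k₁/k₂ is constant. -/
open scoped RealInnerProductSpace

noncomputable section

abbrev E3 := EuclideanSpace ℝ (Fin 3)

/-- Scalar triple product (determinant) of three vectors in `E3`. -/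
def det3 (v₁ v₂ v₃ : E3) : ℝ :=
  Matrix.det (Matrix.of ![(v₁ : Fin 3 → ℝ), (v₂ : Fin 3 → ℝ), (v₃ : Fin 3 → ℝ)])

/-- Smooth orthonormal Frenet frame of a ruled surface along its striction line,
with curvatures `k₁ k₂` and arc-length parameter. -/
structure FrenetRuled (q h a : ℝ → E3) (k₁ k₂ : ℝ → ℝ) : Prop where
  smooth_q : ContDiff ℝ (⊤ : ℕ∞) q
  smooth_h : ContDiff ℝ (⊤ : ℕ∞) h
  smooth_a : ContDiff ℝ (⊤ : ℕ∞) a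
  smooth_k₁ : ContDiff ℝ (⊤ : ℕ∞) k₁
  smooth_k₂ : ContDiff ℝ (⊤ : ℕ∞) k₂
  norm_q : ∀ s, ‖q s‖ = 1
  norm_h : ∀ s, ‖h s‖ = 1
  norm_a : ∀ s, ‖a s‖ = 1
  inner_qh : ∀ s, ⟪q s, h s⟫ = 0
  inner_qa : ∀ s, ⟪q s, a s⟫ = 0
  inner_ha : ∀ s, ⟪h s, a s⟫ = 0
  frenet_q : ∀ s, deriv q s = k₁ s • h s
  frenet_h : ∀ s, deriv h s = -(k₁ s) • q s + k₂ s • a s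
  frenet_a : ∀ s, deriv a s = -(k₂ s) • h s

/-- If `u` is orthogonal to three orthonormal vectors in `E3`, then `u = 0`. -/
lemma eq_zero_of_inner_ortho3 (v₁ v₂ v₃ u : E3)
    (n1 : ‖v₁‖ = 1) (n2 : ‖v₂‖ = 1) (n3 : ‖v₃‖ = 1)
    (o12 : ⟪v₁, v₂⟫ = 0) (o13 : ⟪v₁, v₃⟫ = 0) (o23 : ⟪v₂, v₃⟫ = 0)
    (h1 : ⟪v₁, u⟫ = 0) (h2 : ⟪v₂, u⟫ = 0) (h3 : ⟪v₃, u⟫ = 0) : u = 0 := by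
  set f : Fin 3 → E3 := ![v₁, v₂, v₃] with hf
  have horth : Orthonormal ℝ f := by
    rw [orthonormal_iff_ite]
    intro i j
    fin_cases i <;> fin_cases j <;>
      simp [f, -PiLp.inner_apply, real_inner_self_eq_norm_sq, n1, n2, n3, o12, o13, o23]
    · rw [real_inner_comm]; exact o12
    · rw [real_inner_comm]; exact o13
    · rw [real_inner_comm]; exact o23
  have hspan : Submodule.span ℝ (Set.range f) = ⊤ :=
    horth.linearIndependent.span_eq_top_of_card_eq_finrank (by simp)
  have hmem : u ∈ (Submodule.span ℝ (Set.range f))ᗮ := by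
    rw [Submodule.mem_orthogonal]
    intro x hx
    induction hx using Submodule.span_induction with
    | mem x hx =>
      obtain ⟨i, rfl⟩ := hx
      fin_cases i <;> simpa [f] using (by assumption : _)
    | zero => simp
    | add x y _ _ hx hy => simp [inner_add_left, hx, hy]
    | smul t x _ hx => simp [inner_smul_left, hx]
  rw [hspan, Submodule.top_orthogonal_eq_bot, Submodule.mem_bot] at hmem
  exact hmem

/-- if the ruling `q` makes a constant angle with a fixed nonzero direction,
then `k₁/k₂` is constant. -/
theorem q_slant_implies_ratio_const (q h a : ℝ → E3) (k₁ k₂ : ℝ → ℝ)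
    (hF : FrenetRuled q h a k₁ k₂) (hk₂ : ∀ s, k₂ s ≠ 0)
    (u : E3) (hu : u ≠ 0) (c : ℝ) (hqu : ∀ s, ⟪q s, u⟫ = c) :
    ∃ C : ℝ, ∀ s, k₁ s / k₂ s = C := by
  classical
  have dq := hF.smooth_q.differentiable (by simp)
  have dh := hF.smooth_h.differentiable (by simp)
  have da := hF.smooth_a.differentiable (by simp)
  set g : ℝ → ℝ := fun s => ⟪h s, u⟫ with hgdef
  set w : ℝ → ℝ := fun s => ⟪a s, u⟫ with hwdef
  have hgc : Continuous g := hF.smooth_h.continuous.inner continuous_const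
  -- derivative formulas
  have derivg : ∀ s, deriv g s = -(k₁ s) * c + k₂ s * w s := by
    intro s
    rw [hgdef, deriv_inner_apply ℝ (dh s) (differentiableAt_const u), deriv_const]
    rw [hF.frenet_h s]
    simp [-PiLp.inner_apply, inner_add_left, real_inner_smul_left, hqu s, hwdef]
  have derivw : ∀ s, deriv w s = -(k₂ s) * g s := by
    intro s
    rw [hwdef, deriv_inner_apply ℝ (da s) (differentiableAt_const u), deriv_const]
    rw [hF.frenet_a s]
    simp [-PiLp.inner_apply, real_inner_smul_left, hgdef]
  have hk₁g : ∀ s, k₁ s * g s = 0 := by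
    intro s
    have h1 : deriv (fun t => ⟪q t, u⟫) s = k₁ s * g s := by
      rw [deriv_inner_apply ℝ (dq s) (differentiableAt_const u), deriv_const]
      rw [hF.frenet_q s]
      simp [-PiLp.inner_apply, real_inner_smul_left, hgdef]
    have h2 : (fun t => ⟪q t, u⟫) = fun _ => c := funext hqu
    rw [h2, deriv_const] at h1
    exact h1.symm
  set r : ℝ → ℝ := fun s => k₁ s / k₂ s with hrdef
  have hrs : ContDiff ℝ (⊤ : ℕ∞) r := hF.smooth_k₁.div hF.smooth_k₂ hk₂
  set A : Set ℝ := {s | g s ≠ 0} with hA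
  have hAopen : IsOpen A := isOpen_ne.preimage hgc
  -- on A, r vanishes
  have hrA : ∀ s ∈ A, r s = 0 := by
    intro s hs
    have : k₁ s = 0 := by
      have := hk₁g s
      exact (mul_eq_zero.1 this).resolve_right hs
    simp [hrdef, this]
  -- outside closure A, g vanishes in a neighborhood
  have hgnbhd : ∀ s, s ∉ closure A → g =ᶠ[nhds s] fun _ => 0 := by
    intro s hs
    have hmem : (closure A)ᶜ ∈ nhds s := isClosed_closure.isOpen_compl.mem_nhds hs
    filter_upwards [hmem] with x hx
    by_contra hgx
    exact hx (subset_closure hgx)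
  by_cases hc : c = 0
  · -- then r ≡ 0
    refine ⟨0, fun s => ?_⟩
    by_cases hscl : s ∈ closure A
    · have hclosed : IsClosed {t | r t = 0} :=
        isClosed_eq (hrs.continuous) continuous_const
      exact closure_minimal hrA hclosed hscl
    · exfalso
      have hge : g =ᶠ[nhds s] fun _ => 0 := hgnbhd s hscl
      have hdg : deriv g s = 0 := by rw [hge.deriv_eq, deriv_const]
      rw [derivg s, hc] at hdg
      have hws : w s = 0 := by
        have h0 : k₂ s * w s = 0 := by linarith
        exact (mul_eq_zero.1 h0).resolve_left (hk₂ s)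
      have hgs : g s = 0 := hge.eq_of_nhds
      have hqs : ⟪q s, u⟫ = 0 := by rw [hqu s, hc]
      exact hu (eq_zero_of_inner_ortho3 (q s) (h s) (a s) u (hF.norm_q s)
        (hF.norm_h s) (hF.norm_a s) (hF.inner_qh s) (hF.inner_qa s) (hF.inner_ha s)
        hqs hgs hws)
  · -- show deriv r ≡ 0
    have hrd : Differentiable ℝ r := hrs.differentiable (by simp)
    have hdrc : Continuous (deriv r) := hrs.continuous_deriv (by simp)
    have hdw : Differentiable ℝ w := fun s => (da s).inner ℝ (differentiableAt_const u)
    have hderiv0 : ∀ s, deriv r s = 0 := by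
      intro s
      by_cases hscl : s ∈ closure A
      · -- deriv r = 0 on A, extend by continuity
        have hdrA : ∀ t ∈ A, deriv r t = 0 := by
          intro t ht
          have hAn : A ∈ nhds t := hAopen.mem_nhds ht
          have hre : r =ᶠ[nhds t] fun _ => 0 := by
            filter_upwards [hAn] with x hx
            exact hrA x hx
          rw [hre.deriv_eq, deriv_const]
        have hclosed : IsClosed {t | deriv r t = 0} :=
          isClosed_eq hdrc continuous_const
        exact closure_minimal hdrA hclosed hscl
      · -- g = 0 near s, so r = w/c near s
        have hmem : (closure A)ᶜ ∈ nhds s := isClosed_closure.isOpen_compl.mem_nhds hscl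
        have hre : r =ᶠ[nhds s] fun t => w t / c := by
          filter_upwards [hmem] with x hx
          have hgx : g =ᶠ[nhds x] fun _ => 0 := hgnbhd x hx
          have hdg : deriv g x = 0 := by rw [hgx.deriv_eq, deriv_const]
          rw [derivg x] at hdg
          have hkx : k₁ x * c = k₂ x * w x := by linarith
          rw [hrdef]
          rw [div_eq_div_iff (hk₂ x) hc]
          linarith [hkx]
        rw [hre.deriv_eq, deriv_div_const, derivw s]
        have hgs : g s = 0 := (hgnbhd s hscl).eq_of_nhds
        rw [hgs]
        ring
    exact ⟨r 0, fun s => is_const_of_deriv_eq_zero hrd hderiv0 s 0⟩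
end
end

section
/- Let q, h, a : ℝ → ℝ³ be smooth unit vector fields forming an orthonormal frame satisfying q' = k₁·h, h' = -k₁·q + k₂·a, a' = -k₂·h, where k₁ and k₂ are smooth and nowhere zero on an interval I. Then det(q', q'', q''') = 0 on I if and only if k₁/k₂ is constant on I. -/
open scoped RealInnerProductSpace

noncomputable section

lemma det3_comb (q h a : E3) (b₁ b₂ b₃ c₁ c₂ c₃ d₁ d₂ d₃ : ℝ) :
    det3 (b₁•q+b₂•h+b₃•a) (c₁•q+c₂•h+c₃•a) (d₁•q+d₂•h+d₃•a) =
      (Matrix.det !![b₁,b₂,b₃;c₁,c₂,c₃;d₁,d₂,d₃]) * det3 q h a := by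
  simp only [det3, Matrix.det_fin_three, Matrix.of_apply, Matrix.cons_val', Matrix.cons_val_zero,
    Matrix.cons_val_one, Matrix.head_cons, Matrix.empty_val', Matrix.cons_val_fin_one,
    Matrix.head_fin_const, Matrix.cons_val_two, Matrix.tail_cons, PiLp.add_apply, PiLp.smul_apply,
    smul_eq_mul]
  ring

lemma frame_det_ne (q h a : E3) (nq : ‖q‖ = 1) (nh : ‖h‖ = 1) (na : ‖a‖ = 1)
    (iqh : ⟪q,h⟫ = 0) (iqa : ⟪q,a⟫ = 0) (iha : ⟪h,a⟫ = 0) : det3 q h a ≠ 0 := by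
  have inner_sum : ∀ x y : E3, ⟪x,y⟫ = ∑ k, (x : Fin 3 → ℝ) k * (y : Fin 3 → ℝ) k := by
    intro x y; rw [PiLp.inner_apply]; simp [RCLike.inner_apply, mul_comm]
  set M := Matrix.of ![(q : Fin 3 → ℝ), (h : Fin 3 → ℝ), (a : Fin 3 → ℝ)] with hMdef
  have hqh : ⟪h,q⟫ = 0 := by rw [real_inner_comm]; exact iqh
  have hqa : ⟪a,q⟫ = 0 := by rw [real_inner_comm]; exact iqa
  have hha : ⟪a,h⟫ = 0 := by rw [real_inner_comm]; exact iha
  have nq2 : ⟪q,q⟫ = 1 := by rw [real_inner_self_eq_norm_sq, nq]; norm_num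
  have nh2 : ⟪h,h⟫ = 1 := by rw [real_inner_self_eq_norm_sq, nh]; norm_num
  have na2 : ⟪a,a⟫ = 1 := by rw [real_inner_self_eq_norm_sq, na]; norm_num
  have hM : M * M.transpose = 1 := by
    ext i j
    fin_cases i <;> fin_cases j <;>
      simp only [Matrix.mul_apply, hMdef, Matrix.transpose_apply, Matrix.of_apply,
        Matrix.cons_val', Matrix.cons_val_zero, Matrix.cons_val_one, Matrix.head_cons,
        Matrix.cons_val_two, Matrix.tail_cons, Matrix.empty_val', Matrix.cons_val_fin_one,
        Fin.mk_zero, Fin.mk_one, Matrix.one_apply, Fin.isValue, Fin.reduceFinMk, Matrix.vecHead] <;>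
      rw [← inner_sum] <;> simp_all
  intro h0
  have h1 : det3 q h a * det3 q h a = 1 := by
    have := congrArg Matrix.det hM
    rwa [Matrix.det_mul, Matrix.det_transpose, Matrix.det_one] at this
  rw [h0] at h1; simp at h1

/-- with `k₁, k₂` nowhere zero on an interval `I`,
`det(q', q'', q''') = 0` on `I` iff `k₁/k₂` is constant on `I`. -/
theorem det_q_zero_iff_ratio_const (q h a : ℝ → E3) (k₁ k₂ : ℝ → ℝ)
    (hF : FrenetRuled q h a k₁ k₂)
    (I : Set ℝ) (hIopen : IsOpen I) (hIconv : Convex ℝ I)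
    (hk₁ : ∀ s ∈ I, k₁ s ≠ 0) (hk₂ : ∀ s ∈ I, k₂ s ≠ 0) :
    (∀ s ∈ I, det3 (deriv q s) (deriv (deriv q) s) (deriv (deriv (deriv q)) s) = 0) ↔
      ∃ C : ℝ, ∀ s ∈ I, k₁ s / k₂ s = C := by
  have hk₁d : Differentiable ℝ k₁ := hF.smooth_k₁.differentiable (by simp)
  have hk₂d : Differentiable ℝ k₂ := hF.smooth_k₂.differentiable (by simp)
  have hqd : Differentiable ℝ q := hF.smooth_q.differentiable (by simp)
  have hhd : Differentiable ℝ h := hF.smooth_h.differentiable (by simp)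
  have had : Differentiable ℝ a := hF.smooth_a.differentiable (by simp)
  have hk₁dd : Differentiable ℝ (deriv k₁) :=
    (contDiff_infty_iff_deriv.mp (hF.smooth_k₁.of_le (by simp))).2.differentiable
      (by simp)
  -- first derivative
  have hdq : deriv q = fun s => k₁ s • h s := funext hF.frenet_q
  -- second derivative
  have hddq : deriv (deriv q) = fun s => k₁ s • deriv h s + deriv k₁ s • h s := by
    funext s
    rw [hdq]
    exact ((hk₁d s).hasDerivAt.smul (hhd s).hasDerivAt).deriv
  have hddq' : ∀ s, deriv (deriv q) s =
      (-(k₁ s * k₁ s)) • q s + deriv k₁ s • h s + (k₁ s * k₂ s) • a s := by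
    intro s
    rw [hddq]
    simp only [hF.frenet_h]
    module
  -- third derivative
  have hdddq : ∀ s, deriv (deriv (deriv q)) s =
      (-(3 * k₁ s * deriv k₁ s)) • q s +
        (deriv (deriv k₁) s - k₁ s ^ 3 - k₁ s * k₂ s ^ 2) • h s +
        (2 * deriv k₁ s * k₂ s + k₁ s * deriv k₂ s) • a s := by
    intro s
    rw [hddq]
    have hdh : Differentiable ℝ (deriv h) := by
      intro t
      have : deriv h = fun t => -(k₁ t) • q t + k₂ t • a t := funext hF.frenet_h
      rw [this]
      exact (((hk₁d t).neg.smul (hqd t)).add ((hk₂d t).smul (had t)))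
    have H : HasDerivAt (fun s => k₁ s • deriv h s + deriv k₁ s • h s)
        ((k₁ s • deriv (deriv h) s + deriv k₁ s • deriv h s) +
          (deriv k₁ s • deriv h s + deriv (deriv k₁) s • h s)) s :=
      (((hk₁d s).hasDerivAt.smul (hdh s).hasDerivAt)).add
        ((hk₁dd s).hasDerivAt.smul (hhd s).hasDerivAt)
    rw [H.deriv]
    have hddh : deriv (deriv h) s =
        (-(k₁ s)) • deriv q s + (-(deriv k₁ s)) • q s +
          (k₂ s • deriv a s + deriv k₂ s • a s) := by
      have : deriv h = fun t => -(k₁ t) • q t + k₂ t • a t := funext hF.frenet_h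
      rw [this]
      have := (((hk₁d s).hasDerivAt.neg.smul (hqd s).hasDerivAt).add
        ((hk₂d s).hasDerivAt.smul (had s).hasDerivAt)).deriv
      exact this
      all_goals module
    rw [hddh, hF.frenet_q, hF.frenet_h, hF.frenet_a]
    module
  -- the key determinant identity
  have key : ∀ s, det3 (deriv q s) (deriv (deriv q) s) (deriv (deriv (deriv q)) s) =
      (k₁ s ^ 3 * (k₁ s * deriv k₂ s - deriv k₁ s * k₂ s)) * det3 (q s) (h s) (a s) := by
    intro s
    have h1 : deriv q s = (0:ℝ) • q s + k₁ s • h s + (0:ℝ) • a s := by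
      rw [hF.frenet_q]; module
    rw [h1, hddq' s, hdddq s, det3_comb]
    congr 1
    simp [Matrix.det_fin_three]
    all_goals ring
  have hDne : ∀ s, det3 (q s) (h s) (a s) ≠ 0 := fun s =>
    frame_det_ne _ _ _ (hF.norm_q s) (hF.norm_h s) (hF.norm_a s)
      (hF.inner_qh s) (hF.inner_qa s) (hF.inner_ha s)
  -- reduce to Wronskian
  have main : (∀ s ∈ I, det3 (deriv q s) (deriv (deriv q) s) (deriv (deriv (deriv q)) s) = 0) ↔
      ∀ s ∈ I, k₁ s * deriv k₂ s - deriv k₁ s * k₂ s = 0 := by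
    constructor
    · intro H s hs
      have := H s hs
      rw [key s] at this
      rcases mul_eq_zero.mp this with h0 | h0
      · rcases mul_eq_zero.mp h0 with h0 | h0
        · exact absurd h0 (pow_ne_zero 3 (hk₁ s hs))
        · exact h0
      · exact absurd h0 (hDne s)
    · intro H s hs
      rw [key s, H s hs]
      ring
  rw [main]
  constructor
  · intro H
    rcases Set.eq_empty_or_nonempty I with hI | ⟨s₀, hs₀⟩
    · exact ⟨0, by simp [hI]⟩
    refine ⟨k₁ s₀ / k₂ s₀, fun s hs => ?_⟩
    set f : ℝ → ℝ := fun t => k₁ t / k₂ t with hf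
    have hder : ∀ t ∈ I, HasDerivAt f 0 t := by
      intro t ht
      have := (hk₁d t).hasDerivAt.div (hk₂d t).hasDerivAt (hk₂ t ht)
      have e : (deriv k₁ t * k₂ t - k₁ t * deriv k₂ t) / k₂ t ^ 2 = 0 := by
        have := H t ht
        rw [div_eq_zero_iff]
        left; linarith
      rwa [e] at this
    have hdiff : DifferentiableOn ℝ f I := fun t ht => ((hder t ht).differentiableAt).differentiableWithinAt
    have hfconst := hIconv.is_const_of_fderivWithin_eq_zero hdiff (fun t ht => ?_) hs hs₀
    · exact hfconst
    · rw [fderivWithin_of_isOpen hIopen ht]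
      have : HasFDerivAt f ((1 : ℝ →L[ℝ] ℝ).smulRight (0:ℝ)) t := (hder t ht).hasFDerivAt
      rw [this.fderiv]
      ext
      simp
  · rintro ⟨C, hC⟩ s hs
    have hnb : I ∈ nhds s := hIopen.mem_nhds hs
    have heq : k₁ =ᶠ[nhds s] fun t => C * k₂ t := by
      filter_upwards [hnb] with t ht
      exact (div_eq_iff (hk₂ t ht)).mp (hC t ht)
    have hd1 : deriv k₁ s = C * deriv k₂ s := by
      rw [heq.deriv_eq, deriv_const_mul _ (hk₂d s)]
    have hk1s : k₁ s = C * k₂ s := heq.eq_of_nhds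
    rw [hd1, hk1s]
    ring
end
end

section
/- Let q, h, a : ℝ → ℝ³ be smooth unit vector fields forming an orthonormal frame satisfying q' = k₁·h, h' = -k₁·q + k₂·a, a' = -k₂·h, where k₁ and k₂ are smooth and k₂ is nowhere zero on an interval I. Then det(a', a'', a''') = 0 on I if and only if k₁/k₂ is constant on I. -/
open scoped RealInnerProductSpace

noncomputable section

lemma det3_comb_s5 (q h a : E3) (x₁ y₁ z₁ x₂ y₂ z₂ x₃ y₃ z₃ : ℝ) :
    det3 (x₁•q+y₁•h+z₁•a) (x₂•q+y₂•h+z₂•a) (x₃•q+y₃•h+z₃•a)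
      = (x₁*(y₂*z₃-z₂*y₃) - y₁*(x₂*z₃-z₂*x₃) + z₁*(x₂*y₃-y₂*x₃)) * det3 q h a := by
  simp only [det3, Matrix.det_fin_three, Matrix.of_apply, Matrix.cons_val', Matrix.cons_val_zero,
    Matrix.cons_val_one, Matrix.head_cons, Matrix.empty_val', Matrix.cons_val_fin_one,
    Matrix.head_fin_const, Matrix.cons_val_two, Matrix.tail_cons, PiLp.add_apply, PiLp.smul_apply,
    smul_eq_mul]
  ring

lemma det3_sq_one (q h a : E3) (nq : ‖q‖ = 1) (nh : ‖h‖ = 1) (na : ‖a‖ = 1)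
    (iqh : ⟪q, h⟫ = 0) (iqa : ⟪q, a⟫ = 0) (iha : ⟪h, a⟫ = 0) :
    det3 q h a * det3 q h a = 1 := by
  have key : ∀ u v : E3, ⟪u, v⟫ = u 0 * v 0 + u 1 * v 1 + u 2 * v 2 := by
    intro u v
    simp [PiLp.inner_apply, RCLike.inner_apply, Fin.sum_univ_three, mul_comm]
  have nq' : q 0 * q 0 + q 1 * q 1 + q 2 * q 2 = 1 := by
    rw [← key, real_inner_self_eq_norm_mul_norm, nq]; ring
  have nh' : h 0 * h 0 + h 1 * h 1 + h 2 * h 2 = 1 := by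
    rw [← key, real_inner_self_eq_norm_mul_norm, nh]; ring
  have na' : a 0 * a 0 + a 1 * a 1 + a 2 * a 2 = 1 := by
    rw [← key, real_inner_self_eq_norm_mul_norm, na]; ring
  rw [key] at iqh iqa iha
  set M : Matrix (Fin 3) (Fin 3) ℝ := Matrix.of ![(q : Fin 3 → ℝ), h, a] with hM
  have hMMt : M * M.transpose = 1 := by
    ext i j
    rw [Matrix.mul_apply]
    simp only [Matrix.transpose_apply]
    fin_cases i <;> fin_cases j <;>
      simp [hM, Fin.sum_univ_three, Matrix.one_apply] <;>
      linarith [nq', nh', na', iqh, iqa, iha]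
  have : M.det * M.det = 1 := by
    have := congrArg Matrix.det hMMt
    rwa [Matrix.det_mul, Matrix.det_transpose, Matrix.det_one] at this
  simpa [det3, hM] using this

/-- with `k₂` nowhere zero on an interval `I`,
`det(a', a'', a''') = 0` on `I` iff `k₁/k₂` is constant on `I`. -/
theorem det_a_zero_iff_ratio_const (q h a : ℝ → E3) (k₁ k₂ : ℝ → ℝ)
    (hF : FrenetRuled q h a k₁ k₂)
    (I : Set ℝ) (hIopen : IsOpen I) (hIconv : Convex ℝ I)
    (hk₂ : ∀ s ∈ I, k₂ s ≠ 0) :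
    (∀ s ∈ I, det3 (deriv a s) (deriv (deriv a) s) (deriv (deriv (deriv a)) s) = 0) ↔
      ∃ C : ℝ, ∀ s ∈ I, k₁ s / k₂ s = C := by
  -- differentiability facts
  have dq : ∀ s, HasDerivAt q (k₁ s • h s) s := fun s => by
    have := (hF.smooth_q.differentiable (by simp) s).hasDerivAt
    rwa [hF.frenet_q s] at this
  have dh : ∀ s, HasDerivAt h (-(k₁ s) • q s + k₂ s • a s) s := fun s => by
    have := (hF.smooth_h.differentiable (by simp) s).hasDerivAt
    rwa [hF.frenet_h s] at this
  have dk₁ : ∀ s, HasDerivAt k₁ (deriv k₁ s) s := fun s =>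
    (hF.smooth_k₁.differentiable (by simp) s).hasDerivAt
  have dk₂ : ∀ s, HasDerivAt k₂ (deriv k₂ s) s := fun s =>
    (hF.smooth_k₂.differentiable (by simp) s).hasDerivAt
  have sdk₂ : ContDiff ℝ ((⊤ : ℕ∞) : WithTop ℕ∞) (deriv k₂) := (contDiff_infty_iff_deriv.mp (hF.smooth_k₂.of_le (by simp))).2
  have ddk₂ : ∀ s, HasDerivAt (deriv k₂) (deriv (deriv k₂) s) s := fun s =>
    (sdk₂.differentiable (by simp) s).hasDerivAt
  -- first derivative of a
  have ha1 : deriv a = fun s => -(k₂ s) • h s := funext hF.frenet_a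
  -- second derivative
  set A2 : ℝ → E3 := fun s =>
    (k₁ s * k₂ s) • q s + (-(deriv k₂ s)) • h s + (-(k₂ s * k₂ s)) • a s with hA2
  have dA2 : ∀ s, HasDerivAt (fun s => -(k₂ s) • h s) (A2 s) s := by
    intro s
    have h1 : HasDerivAt (fun s => -(k₂ s)) (-(deriv k₂ s)) s := (dk₂ s).neg
    have := h1.smul (dh s)
    refine this.congr_deriv ?_
    rw [hA2]
    module
  have ha2 : deriv (deriv a) = A2 := by
    funext s
    rw [ha1]
    exact (dA2 s).deriv
  -- third derivative
  set A3 : ℝ → E3 := fun s =>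
    (deriv k₁ s * k₂ s + 2 * (k₁ s * deriv k₂ s)) • q s
      + (k₁ s * k₁ s * k₂ s - deriv (deriv k₂) s + k₂ s * k₂ s * k₂ s) • h s
      + (-(3 * (k₂ s * deriv k₂ s))) • a s with hA3
  have dA3 : ∀ s, HasDerivAt A2 (A3 s) s := by
    intro s
    have da' : HasDerivAt a (-(k₂ s) • h s) s := by
      have := (hF.smooth_a.differentiable (by simp) s).hasDerivAt
      rwa [hF.frenet_a s] at this
    have t1 : HasDerivAt (fun s => (k₁ s * k₂ s) • q s)
        ((k₁ s * k₂ s) • (k₁ s • h s) + (deriv k₁ s * k₂ s + k₁ s * deriv k₂ s) • q s) s :=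
      ((dk₁ s).mul (dk₂ s)).smul (dq s)
    have t2 : HasDerivAt (fun s => (-(deriv k₂ s)) • h s)
        ((-(deriv k₂ s)) • (-(k₁ s) • q s + k₂ s • a s) + (-(deriv (deriv k₂) s)) • h s) s :=
      (ddk₂ s).neg.smul (dh s)
    have t3 : HasDerivAt (fun s => (-(k₂ s * k₂ s)) • a s)
        ((-(k₂ s * k₂ s)) • (-(k₂ s) • h s) + (-(deriv k₂ s * k₂ s + k₂ s * deriv k₂ s)) • a s) s :=
      ((dk₂ s).mul (dk₂ s)).neg.smul da'
    have := (t1.add t2).add t3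
    refine this.congr_deriv ?_
    rw [hA3]
    module
  have ha3 : ∀ s, deriv (deriv (deriv a)) s = A3 s := by
    intro s
    rw [ha2]
    exact (dA3 s).deriv
  -- triple product value
  have hdet : ∀ s, det3 (deriv a s) (deriv (deriv a) s) (deriv (deriv (deriv a)) s)
      = (k₂ s)^3 * (deriv k₁ s * k₂ s - k₁ s * deriv k₂ s) * det3 (q s) (h s) (a s) := by
    intro s
    have e1 : deriv a s = (0:ℝ) • q s + (-(k₂ s)) • h s + (0:ℝ) • a s := by
      rw [hF.frenet_a s]; module
    have e2 : deriv (deriv a) s = A2 s := congrFun ha2 s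
    have e3 : deriv (deriv (deriv a)) s = A3 s := ha3 s
    rw [e1, e2, e3]
    simp only [hA2, hA3]
    rw [det3_comb_s5]
    ring
  have hε : ∀ s, det3 (q s) (h s) (a s) ≠ 0 := by
    intro s hz
    have := det3_sq_one (q s) (h s) (a s) (hF.norm_q s) (hF.norm_h s) (hF.norm_a s)
      (hF.inner_qh s) (hF.inner_qa s) (hF.inner_ha s)
    rw [hz] at this; norm_num at this
  -- derivative of the ratio
  have dg : ∀ s ∈ I, HasDerivAt (fun t => k₁ t / k₂ t)
      ((deriv k₁ s * k₂ s - k₁ s * deriv k₂ s) / (k₂ s)^2) s := by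
    intro s hs
    exact (dk₁ s).div (dk₂ s) (hk₂ s hs)
  constructor
  · intro hzero
    rcases Set.eq_empty_or_nonempty I with hI | ⟨s₀, hs₀⟩
    · exact ⟨0, fun s hs => by simp [hI] at hs⟩
    refine ⟨k₁ s₀ / k₂ s₀, fun s hs => ?_⟩
    have hW : ∀ x ∈ I, (deriv k₁ x * k₂ x - k₁ x * deriv k₂ x) = 0 := by
      intro x hx
      have := hzero x hx
      rw [hdet x] at this
      rcases mul_eq_zero.mp this with h' | h'
      · rcases mul_eq_zero.mp h' with h'' | h''
        · exact absurd h'' (pow_ne_zero 3 (hk₂ x hx))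
        · exact h''
      · exact absurd h' (hε x)
    have key : ∀ x ∈ I, ∀ y ∈ I, k₁ y / k₂ y = k₁ x / k₂ x := by
      intro x hx y hy
      have hle := hIconv.norm_image_sub_le_of_norm_hasDerivWithin_le
        (C := 0) (f := fun t => k₁ t / k₂ t)
        (f' := fun x => (deriv k₁ x * k₂ x - k₁ x * deriv k₂ x) / (k₂ x)^2)
        (fun x hx => (dg x hx).hasDerivWithinAt)
        (fun x hx => by beta_reduce; rw [hW x hx]; simp) hx hy
      have : ‖k₁ y / k₂ y - k₁ x / k₂ x‖ ≤ 0 := by simpa using hle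
      have := le_antisymm this (norm_nonneg _)
      rwa [norm_eq_zero, sub_eq_zero] at this
    exact key s₀ hs₀ s hs
  · rintro ⟨C, hC⟩ s hs
    have hconst : (fun t => k₁ t / k₂ t) =ᶠ[nhds s] fun _ => C :=
      Filter.eventuallyEq_of_mem (hIopen.mem_nhds hs) hC
    have hd0 : deriv (fun t => k₁ t / k₂ t) s = 0 := by
      rw [hconst.deriv_eq]; simp
    have := (dg s hs).deriv
    rw [hd0] at this
    have hnum : deriv k₁ s * k₂ s - k₁ s * deriv k₂ s = 0 := by
      have h2 : (k₂ s)^2 ≠ 0 := pow_ne_zero 2 (hk₂ s hs)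
      rw [eq_comm, div_eq_zero_iff] at this
      exact this.resolve_right h2
    rw [hdet s, hnum]
    ring
end
end

section
/- Let q, h, a : ℝ → ℝ³ be smooth unit vector fields forming an orthonormal frame satisfying q' = k₁·h, h' = -k₁·q + k₂·a, a' = -k₂·h, with k₁, k₂ smooth and nowhere zero. If k₁/k₂ is constant, then q''' = m·q' + 3k₁'·h', where m = k₁''/k₁ - (k₁² + k₂²). -/
open scoped RealInnerProductSpace

noncomputable section

/-- if `k₁/k₂` is constant, then `q''' = m·q' + 3k₁'·h'`
with `m = k₁''/k₁ - (k₁² + k₂²)`. -/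
theorem ratio_const_implies_q_third (q h a : ℝ → E3) (k₁ k₂ : ℝ → ℝ)
    (hF : FrenetRuled q h a k₁ k₂)
    (hk₁ : ∀ s, k₁ s ≠ 0) (hk₂ : ∀ s, k₂ s ≠ 0)
    (hratio : ∃ C : ℝ, ∀ s, k₁ s / k₂ s = C) :
    ∀ s, deriv (deriv (deriv q)) s =
      (deriv (deriv k₁) s / k₁ s - (k₁ s ^ 2 + k₂ s ^ 2)) • deriv q s
        + (3 * deriv k₁ s) • deriv h s := by
  obtain ⟨C, hC⟩ := hratio
  have Dq := hF.smooth_q.differentiable (by simp)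
  have Dh := hF.smooth_h.differentiable (by simp)
  have Da := hF.smooth_a.differentiable (by simp)
  have Dk1 := hF.smooth_k₁.differentiable (by simp)
  have Dk2 := hF.smooth_k₂.differentiable (by simp)
  have Dk1' : Differentiable ℝ (deriv k₁) :=
    ((contDiff_infty_iff_deriv.mp (hF.smooth_k₁.of_le (by simp))).2).differentiable (by simp)
  have hk1eq : ∀ t, k₁ t = C * k₂ t := fun t => by
    have := (div_eq_iff (hk₂ t)).mp (hC t)
    linarith [this]
  have hdk1 : ∀ t, deriv k₁ t = C * deriv k₂ t := fun t => by
    have hfun : k₁ = fun u => C * k₂ u := funext hk1eq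
    rw [hfun, deriv_const_mul _ (Dk2 t)]
  have key : ∀ t, k₁ t * deriv k₂ t = deriv k₁ t * k₂ t := fun t => by
    rw [hk1eq t, hdk1 t]; ring
  intro s
  have hdq : deriv q = fun t => k₁ t • h t := funext hF.frenet_q
  have hq2 : deriv (deriv q) = fun t =>
      deriv k₁ t • h t + (-(k₁ t * k₁ t)) • q t + (k₁ t * k₂ t) • a t := by
    funext t
    rw [hdq, deriv_fun_smul (Dk1 t) (Dh t), hF.frenet_h t]
    rw [smul_add, smul_smul, smul_smul]
    ring_nf
    module
  rw [hq2]
  have D1 : DifferentiableAt ℝ (fun t => deriv k₁ t • h t) s := (Dk1' s).smul (Dh s)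
  have D2 : DifferentiableAt ℝ (fun t => (-(k₁ t * k₁ t)) • q t) s :=
    (((Dk1 s).mul (Dk1 s)).neg).smul (Dq s)
  have D3 : DifferentiableAt ℝ (fun t => (k₁ t * k₂ t) • a t) s :=
    ((Dk1 s).mul (Dk2 s)).smul (Da s)
  rw [deriv_fun_add (D1.fun_add D2) D3, deriv_fun_add D1 D2,
    deriv_fun_smul (Dk1' s) (Dh s),
    deriv_fun_smul (((Dk1 s).fun_mul (Dk1 s)).fun_neg) (Dq s),
    deriv_fun_smul ((Dk1 s).fun_mul (Dk2 s)) (Da s)]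
  have hneg : deriv (fun t => -(k₁ t * k₁ t)) s = -(deriv k₁ s * k₁ s + k₁ s * deriv k₁ s) := by
    rw [deriv.fun_neg, deriv_fun_mul (Dk1 s) (Dk1 s)]
  rw [hneg, deriv_fun_mul (Dk1 s) (Dk2 s), hF.frenet_q s, hF.frenet_h s, hF.frenet_a s]
  have hkey := key s
  have hk := hk₁ s
  match_scalars
  · ring
  · linarith [hkey]
  · field_simp
    ring
end
end

section
/- Let q, h, a : ℝ → ℝ³ be smooth unit vector fields forming an orthonormal frame satisfying q' = k₁·h, h' = -k₁·q + k₂·a, a' = -k₂·h, with k₁, k₂ smooth and nowhere zero on an interval I. If q''' = m·q' + 3k₁'·h' holds on I with m = k₁''/k₁ - (k₁² + k₂²), then k₂'/k₂ = k₁'/k₁ on I, and consequently k₁/k₂ is constant on I. -/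
open scoped RealInnerProductSpace

noncomputable section

/-- if `q''' = m·q' + 3k₁'·h'` with `m = k₁''/k₁ - (k₁² + k₂²)` on `I`,
then `k₂'/k₂ = k₁'/k₁` on `I` and `k₁/k₂` is constant on `I`. -/
theorem q_third_implies_ratio_const (q h a : ℝ → E3) (k₁ k₂ : ℝ → ℝ)
    (hF : FrenetRuled q h a k₁ k₂)
    (I : Set ℝ) (hIopen : IsOpen I) (hIconv : Convex ℝ I)
    (hk₁ : ∀ s ∈ I, k₁ s ≠ 0) (hk₂ : ∀ s ∈ I, k₂ s ≠ 0)
    (hq3 : ∀ s ∈ I, deriv (deriv (deriv q)) s =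
      (deriv (deriv k₁) s / k₁ s - (k₁ s ^ 2 + k₂ s ^ 2)) • deriv q s
        + (3 * deriv k₁ s) • deriv h s) :
    (∀ s ∈ I, deriv k₂ s / k₂ s = deriv k₁ s / k₁ s) ∧
      ∃ C : ℝ, ∀ s ∈ I, k₁ s / k₂ s = C := by
  obtain ⟨sq, sh, sa, sk₁, sk₂, nq, nh, na, iqh, iqa, iha, fq, fh, fa⟩ := hF
  have dq : ∀ s, HasDerivAt q (deriv q s) s := fun s => (sq.differentiable (by simp) s).hasDerivAt
  have dh : ∀ s, HasDerivAt h (deriv h s) s := fun s => (sh.differentiable (by simp) s).hasDerivAt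
  have da : ∀ s, HasDerivAt a (deriv a s) s := fun s => (sa.differentiable (by simp) s).hasDerivAt
  have dk₁ : ∀ s, HasDerivAt k₁ (deriv k₁ s) s :=
    fun s => (sk₁.differentiable (by simp) s).hasDerivAt
  have dk₂ : ∀ s, HasDerivAt k₂ (deriv k₂ s) s :=
    fun s => (sk₂.differentiable (by simp) s).hasDerivAt
  have sk₁' : ContDiff ℝ ((⊤ : ℕ∞) : WithTop ℕ∞) (deriv k₁) := (contDiff_infty_iff_deriv.mp (sk₁.of_le (by simp))).2
  have ddk₁ : ∀ s, HasDerivAt (deriv k₁) (deriv (deriv k₁) s) s :=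
    fun s => (sk₁'.differentiable (by simp) s).hasDerivAt
  have hdq : deriv q = fun s => k₁ s • h s := funext fq
  -- second derivative of q
  have hq2 : ∀ s, HasDerivAt (deriv q)
      (k₁ s • (-(k₁ s) • q s + k₂ s • a s) + deriv k₁ s • h s) s := by
    intro s
    rw [hdq]
    have := (dk₁ s).smul (dh s)
    rwa [fh s] at this
  have hdq2 : deriv (deriv q)
      = fun s => k₁ s • (-(k₁ s) • q s + k₂ s • a s) + deriv k₁ s • h s :=
    funext fun s => (hq2 s).deriv
  -- derivative of the inner expression
  have hg : ∀ s, HasDerivAt (fun t => -(k₁ t) • q t + k₂ t • a t)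
      ((-(k₁ s)) • (k₁ s • h s) + (-(deriv k₁ s)) • q s
        + (k₂ s • ((-(k₂ s)) • h s) + deriv k₂ s • a s)) s := by
    intro s
    have h1 := ((dk₁ s).neg.smul (dq s)).add ((dk₂ s).smul (da s))
    rwa [fq s, fa s] at h1
  -- third derivative of q
  have hq3full : ∀ s, HasDerivAt (deriv (deriv q))
      ((k₁ s • ((-(k₁ s)) • (k₁ s • h s) + (-(deriv k₁ s)) • q s
          + (k₂ s • ((-(k₂ s)) • h s) + deriv k₂ s • a s))
        + deriv k₁ s • (-(k₁ s) • q s + k₂ s • a s))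
        + (deriv k₁ s • (-(k₁ s) • q s + k₂ s • a s)
          + deriv (deriv k₁) s • h s)) s := by
    intro s
    rw [hdq2]
    have h1 : HasDerivAt (fun t => deriv k₁ t • h t)
        (deriv k₁ s • (-(k₁ s) • q s + k₂ s • a s) + deriv (deriv k₁) s • h s) s := by
      have := (ddk₁ s).smul (dh s)
      rwa [fh s] at this
    exact ((dk₁ s).smul (hg s)).add h1
  -- inner products with a
  have iaq : ∀ s, ⟪a s, q s⟫ = 0 := fun s => by rw [real_inner_comm]; exact iqa s
  have iah : ∀ s, ⟪a s, h s⟫ = 0 := fun s => by rw [real_inner_comm]; exact iha s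
  have iaa : ∀ s, ⟪a s, a s⟫ = 1 := fun s => by
    rw [real_inner_self_eq_norm_mul_norm, na s]; ring
  -- the key pointwise identity
  have key : ∀ s ∈ I, k₁ s * deriv k₂ s = deriv k₁ s * k₂ s := by
    intro s hs
    have e := hq3 s hs
    rw [(hq3full s).deriv, fq s, fh s] at e
    have e2 := congrArg (fun v : E3 => ⟪a s, v⟫) e
    simp only [inner_add_right, real_inner_smul_right, iaq s, iah s, iaa s,
      mul_zero, mul_one, add_zero, zero_add, mul_neg, neg_mul, mul_add] at e2
    nlinarith [e2]
  refine ⟨fun s hs => ?_, ?_⟩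
  · have h1 := key s hs
    rw [div_eq_div_iff (hk₂ s hs) (hk₁ s hs)]
    linarith
  · rcases Set.eq_empty_or_nonempty I with hI | ⟨s₀, hs₀⟩
    · exact ⟨0, by simp [hI]⟩
    · refine ⟨k₁ s₀ / k₂ s₀, fun s hs => ?_⟩
      have hf0 : ∀ x ∈ I, HasDerivAt (fun t => k₁ t / k₂ t) 0 x := by
        intro x hx
        have hd := (dk₁ x).div (dk₂ x) (hk₂ x hx)
        have hz : (deriv k₁ x * k₂ x - k₁ x * deriv k₂ x) / k₂ x ^ 2 = 0 := by
          have := key x hx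
          have hnum : deriv k₁ x * k₂ x - k₁ x * deriv k₂ x = 0 := by linarith
          rw [hnum, zero_div]
        rwa [hz] at hd
      have hle := hIconv.norm_image_sub_le_of_norm_hasDerivWithin_le
        (f' := fun _ : ℝ => (0 : ℝ)) (C := 0)
        (fun x hx => (hf0 x hx).hasDerivWithinAt)
        (fun x hx => by simp) hs₀ hs
      have : ‖k₁ s / k₂ s - k₁ s₀ / k₂ s₀‖ ≤ 0 := by simpa using hle
      have := norm_le_zero_iff.mp this
      linarith [sub_eq_zero.mp this]
end
end

section
/- Let q, h, a : ℝ → ℝ³ be smooth unit vector fields forming an orthonormal frame satisfying q' = k₁·h, h' = -k₁·q + k₂·a, a' = -k₂·h, with k₁ nowhere zero. If there exists a nonzero constant vector u and constant c with ⟪h s, u⟫ = c for all s, then the function σ = (k₁²/(k₁² + k₂²)^{3/2})·(k₂/k₁)' is constant. -/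
open scoped RealInnerProductSpace

noncomputable section

lemma aux_orth_zero (q h a : E3) (hq : ‖q‖ = 1) (hh : ‖h‖ = 1) (ha : ‖a‖ = 1)
    (hqh : ⟪q, h⟫ = 0) (hqa : ⟪q, a⟫ = 0) (hha : ⟪h, a⟫ = 0)
    (u : E3) (h1 : ⟪q, u⟫ = 0) (h2 : ⟪h, u⟫ = 0) (h3 : ⟪a, u⟫ = 0) : u = 0 := by
  set b : Fin 3 → E3 := ![q, h, a] with hb
  have hqq : ⟪q, q⟫ = (1:ℝ) := by rw [real_inner_self_eq_norm_sq, hq]; norm_num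
  have hhh : ⟪h, h⟫ = (1:ℝ) := by rw [real_inner_self_eq_norm_sq, hh]; norm_num
  have haa : ⟪a, a⟫ = (1:ℝ) := by rw [real_inner_self_eq_norm_sq, ha]; norm_num
  have hhq : ⟪h, q⟫ = (0:ℝ) := by rw [real_inner_comm]; exact hqh
  have haq : ⟪a, q⟫ = (0:ℝ) := by rw [real_inner_comm]; exact hqa
  have hah : ⟪a, h⟫ = (0:ℝ) := by rw [real_inner_comm]; exact hha
  have horth : Orthonormal ℝ b := by
    rw [orthonormal_iff_ite]
    intro i j
    fin_cases i <;> fin_cases j <;>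
      simp only [hb, Matrix.cons_val_zero, Matrix.cons_val_one, Matrix.head_cons,
        Matrix.cons_val_two, Matrix.tail_cons, Fin.mk_zero, Fin.mk_one] <;>
      first
        | simpa using hqq | simpa using hhh | simpa using haa
        | simpa using hqh | simpa using hqa | simpa using hha
        | simpa using hhq | simpa using haq | simpa using hah
  have hli := horth.linearIndependent
  have hcard : Fintype.card (Fin 3) = Module.finrank ℝ E3 := by
    simp [finrank_euclideanSpace_fin]
  let B := basisOfLinearIndependentOfCardEqFinrank hli hcard
  have hBspan : Submodule.span ℝ (Set.range b) = ⊤ := by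
    have := B.span_eq
    rwa [coe_basisOfLinearIndependentOfCardEqFinrank] at this
  have humem : u ∈ Submodule.span ℝ (Set.range b) := by rw [hBspan]; trivial
  obtain ⟨cf, hcf⟩ := (Finsupp.mem_span_range_iff_exists_finsupp).1 humem
  have hz : ⟪u, u⟫ = 0 := by
    calc ⟪u, u⟫ = ⟪(cf.sum fun i r => r • b i), u⟫ := by rw [hcf]
    _ = 0 := by
        rw [Finsupp.sum, sum_inner]
        apply Finset.sum_eq_zero
        intro i _
        fin_cases i <;> simp [hb, inner_smul_left, h1, h2, h3]
  exact inner_self_eq_zero.1 hz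

/-- if the central normal `h` makes a constant angle with a fixed nonzero
direction, then `σ = (k₁²/(k₁²+k₂²)^{3/2})·(k₂/k₁)'` is constant. -/
theorem h_slant_implies_sigma_const (q h a : ℝ → E3) (k₁ k₂ : ℝ → ℝ)
    (hF : FrenetRuled q h a k₁ k₂) (hk₁ : ∀ s, k₁ s ≠ 0)
    (u : E3) (hu : u ≠ 0) (c : ℝ) (hhu : ∀ s, ⟪h s, u⟫ = c) :
    ∃ C : ℝ, ∀ s,
      k₁ s ^ 2 / (k₁ s ^ 2 + k₂ s ^ 2) ^ ((3 : ℝ) / 2)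
        * deriv (fun t => k₂ t / k₁ t) s = C := by
  classical
  -- basic differentiability
  have hqd : ∀ s, HasDerivAt q (k₁ s • h s) s := fun s => by
    have := ((hF.smooth_q.differentiable (by simp)) s).hasDerivAt
    rwa [hF.frenet_q s] at this
  have hhd : ∀ s, HasDerivAt h (-(k₁ s) • q s + k₂ s • a s) s := fun s => by
    have := ((hF.smooth_h.differentiable (by simp)) s).hasDerivAt
    rwa [hF.frenet_h s] at this
  have had : ∀ s, HasDerivAt a (-(k₂ s) • h s) s := fun s => by
    have := ((hF.smooth_a.differentiable (by simp)) s).hasDerivAt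
    rwa [hF.frenet_a s] at this
  set α : ℝ → ℝ := fun s => ⟪q s, u⟫ with hαdef
  set β : ℝ → ℝ := fun s => ⟪a s, u⟫ with hβdef
  -- derivatives of α, β
  have hαd : ∀ s, HasDerivAt α (k₁ s * c) s := fun s => by
    have := (hqd s).inner ℝ (hasDerivAt_const s u)
    simpa [inner_smul_left, hhu s, mul_comm] using this
  have hβd : ∀ s, HasDerivAt β (-(k₂ s) * c) s := fun s => by
    have := (had s).inner ℝ (hasDerivAt_const s u)
    simpa [inner_smul_left, hhu s, mul_comm] using this
  -- the key relation k₁ α = k₂ β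
  have hrel : ∀ s, k₁ s * α s = k₂ s * β s := by
    intro s
    have h1 : HasDerivAt (fun t => ⟪h t, u⟫) (-(k₁ s) * α s + k₂ s * β s) s := by
      have := (hhd s).inner ℝ (hasDerivAt_const s u)
      simpa [inner_add_left, inner_smul_left, mul_comm] using this
    have h2 : HasDerivAt (fun t => ⟪h t, u⟫) 0 s := by
      have : (fun t : ℝ => ⟪h t, u⟫) = fun _ => c := funext hhu
      rw [this]; exact hasDerivAt_const s c
    have := h1.unique h2
    linarith [this]
  -- α² + β² is constant
  have hAd : ∀ s, HasDerivAt (fun t => α t ^ 2 + β t ^ 2) 0 s := fun s => by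
    have := (((hαd s).fun_pow 2).add ((hβd s).fun_pow 2))
    refine this.congr_deriv ?_
    push_cast
    linear_combination 2 * c * (hrel s)
  set R2 : ℝ := α 0 ^ 2 + β 0 ^ 2 with hR2def
  have hA : ∀ s, α s ^ 2 + β s ^ 2 = R2 := by
    intro s
    have hdiff : Differentiable ℝ (fun t => α t ^ 2 + β t ^ 2) :=
      fun t => ((hAd t).differentiableAt)
    have hzero : ∀ t, deriv (fun t => α t ^ 2 + β t ^ 2) t = 0 := fun t => (hAd t).deriv
    exact is_const_of_deriv_eq_zero hdiff hzero s 0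
  -- R2 > 0
  have hR2pos : 0 < R2 := by
    rcases lt_or_eq_of_le (by positivity : (0:ℝ) ≤ R2) with hpos | heq
    · exact hpos
    · exfalso
      have hαz : ∀ s, α s = 0 := fun s => by nlinarith [hA s, sq_nonneg (α s), sq_nonneg (β s)]
      have hβz : ∀ s, β s = 0 := fun s => by nlinarith [hA s, sq_nonneg (α s), sq_nonneg (β s)]
      have hc0 : c = 0 := by
        have h1 : HasDerivAt α 0 0 := by
          have : α = fun _ => (0:ℝ) := funext hαz
          rw [this]; exact hasDerivAt_const 0 0
        have h2 := (hαd 0).unique h1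
        rcases mul_eq_zero.1 h2 with h3 | h3
        · exact absurd h3 (hk₁ 0)
        · exact h3
      exact hu (aux_orth_zero (q 0) (h 0) (a 0) (hF.norm_q 0) (hF.norm_h 0) (hF.norm_a 0)
        (hF.inner_qh 0) (hF.inner_qa 0) (hF.inner_ha 0) u (hαz 0) (by rw [hhu 0, hc0]) (hβz 0))
  -- differentiating k₁ α = k₂ β
  have hR4 : ∀ s, deriv k₁ s * α s + k₁ s * (k₁ s * c)
      = deriv k₂ s * β s + k₂ s * (-(k₂ s) * c) := by
    intro s
    have hd1 : HasDerivAt (fun t => k₁ t * α t)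
        (deriv k₁ s * α s + k₁ s * (k₁ s * c)) s :=
      (((hF.smooth_k₁.differentiable (by simp)) s).hasDerivAt).mul (hαd s)
    have hd2 : HasDerivAt (fun t => k₂ t * β t)
        (deriv k₂ s * β s + k₂ s * (-(k₂ s) * c)) s :=
      (((hF.smooth_k₂.differentiable (by simp)) s).hasDerivAt).mul (hβd s)
    have heq : (fun t => k₁ t * α t) = fun t => k₂ t * β t := funext hrel
    rw [heq] at hd1
    exact hd1.unique hd2
  set D : ℝ → ℝ := fun s => k₁ s ^ 2 + k₂ s ^ 2 with hDdef
  have hDpos : ∀ s, 0 < D s := fun s => by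
    have := hk₁ s; positivity
  set W : ℝ → ℝ := fun s => deriv k₂ s * k₁ s - k₂ s * deriv k₁ s with hWdef
  have hWβ : ∀ s, W s * β s = c * k₁ s * D s := by
    intro s
    have h4 := hR4 s
    have h5 := hrel s
    simp only [hWdef, hDdef]
    linear_combination (deriv k₁ s) * h5 - (k₁ s) * h4
  have hβD : ∀ s, β s ^ 2 * D s = R2 * k₁ s ^ 2 := by
    intro s
    have h5 := hrel s
    have h6 := hA s
    simp only [hDdef]
    linear_combination k₁ s ^ 2 * h6 - (k₁ s * α s + k₂ s * β s) * h5
  set F : ℝ → ℝ := fun s => W s / (D s) ^ ((3:ℝ)/2) with hFdef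
  have hDrpow_pos : ∀ s, 0 < (D s) ^ ((3:ℝ)/2) := fun s =>
    Real.rpow_pos_of_pos (hDpos s) _
  have hrpow_sq : ∀ s, ((D s) ^ ((3:ℝ)/2)) ^ 2 = (D s) ^ 3 := by
    intro s
    have e : ((3:ℝ)/2) * ((2:ℕ):ℝ) = ((3:ℕ):ℝ) := by norm_num
    rw [← Real.rpow_natCast ((D s) ^ ((3:ℝ)/2)) 2, ← Real.rpow_mul (hDpos s).le, e,
      Real.rpow_natCast]
  -- F² = c²/R2
  have hFsq : ∀ s, F s ^ 2 = c ^ 2 / R2 := by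
    intro s
    have key : W s ^ 2 * R2 * k₁ s ^ 2 = c ^ 2 * (D s) ^ 3 * k₁ s ^ 2 := by
      linear_combination (W s * β s + c * k₁ s * D s) * D s * hWβ s - W s ^ 2 * hβD s
    have key2 : W s ^ 2 * R2 = c ^ 2 * (D s) ^ 3 :=
      mul_right_cancel₀ (pow_ne_zero 2 (hk₁ s)) key
    simp only [hFdef]
    rw [div_pow, hrpow_sq s]
    rw [div_eq_div_iff (pow_ne_zero 3 (hDpos s).ne') (ne_of_gt hR2pos)]
    linear_combination key2
  -- F is continuous
  have hFcont : Continuous F := by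
    refine Continuous.div ?_ ?_ ?_
    · exact ((hF.smooth_k₂.continuous_deriv (by simp)).mul hF.smooth_k₁.continuous).sub
        (hF.smooth_k₂.continuous.mul (hF.smooth_k₁.continuous_deriv (by simp)))
    · exact Continuous.rpow_const
        ((hF.smooth_k₁.continuous.pow 2).add (hF.smooth_k₂.continuous.pow 2))
        (fun x => Or.inr (by norm_num))
    · exact fun x => (hDrpow_pos x).ne'

  -- F is constant
  have hFconst : ∀ s, F s = F 0 := by
    intro s
    by_cases hc : c = 0
    · have h1 : F s = 0 := by
        have := hFsq s; rw [hc] at this; simpa using pow_eq_zero_iff (n := 2) (by norm_num) |>.1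
          (by simpa using this)
      have h2 : F 0 = 0 := by
        have := hFsq 0; rw [hc] at this; simpa using pow_eq_zero_iff (n := 2) (by norm_num) |>.1
          (by simpa using this)
      rw [h1, h2]
    · have hne : ∀ t, F t ≠ 0 := by
        intro t ht
        have := hFsq t
        rw [ht] at this
        have : c ^ 2 / R2 = 0 := by simpa using this.symm
        exact (div_ne_zero (pow_ne_zero 2 hc) hR2pos.ne') this
      have hsq : F s ^ 2 = F 0 ^ 2 := by rw [hFsq s, hFsq 0]
      have hor : F s = F 0 ∨ F s = -(F 0) := sq_eq_sq_iff_eq_or_eq_neg.1 hsq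
      rcases hor with h1 | h1
      · exact h1
      · exfalso
        rcases lt_trichotomy (F 0) 0 with hlt | heq | hgt
        · have hFs : 0 < F s := by rw [h1]; linarith
          have : (0:ℝ) ∈ Set.Icc (F 0) (F s) := ⟨hlt.le, hFs.le⟩
          obtain ⟨t, ht⟩ := intermediate_value_univ 0 s hFcont this
          exact hne t ht
        · exact hne 0 heq
        · have hFs : F s < 0 := by rw [h1]; linarith
          have : (0:ℝ) ∈ Set.Icc (F s) (F 0) := ⟨hFs.le, hgt.le⟩
          obtain ⟨t, ht⟩ := intermediate_value_univ s 0 hFcont this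
          exact hne t ht
  -- conclude
  refine ⟨F 0, fun s => ?_⟩
  have hderivq : deriv (fun t => k₂ t / k₁ t) s
      = (deriv k₂ s * k₁ s - k₂ s * deriv k₁ s) / k₁ s ^ 2 :=
    deriv_div ((hF.smooth_k₂.differentiable (by simp)) s)
      ((hF.smooth_k₁.differentiable (by simp)) s) (hk₁ s)
  rw [hderivq, ← hFconst s]
  simp only [hFdef, hWdef, hDdef]
  have h1 := hk₁ s
  have h2 := (hDrpow_pos s).ne'
  field_simp
end
end

section
/- Let q, h, a : ℝ → ℝ³ be smooth unit vector fields forming an orthonormal frame satisfying q' = k₁·h, h' = -k₁·q + k₂·a, a' = -k₂·h, with k₁² + k₂² nowhere zero. If the function d = (k₁²/(k₁² + k₂²)^{3/2})·(k₂/k₁)' is a constant, then the vector u = (k₂/√(k₁² + k₂²))·q + d·h + (k₁/√(k₁² + k₂²))·a is constant (has vanishing derivative), and ⟪h s, u⟫ = d for all s. -/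
open scoped RealInnerProductSpace

noncomputable section

/-- if `d = (k₁²/(k₁²+k₂²)^{3/2})·(k₂/k₁)'` is constant, then
`u = (k₂/√(k₁²+k₂²))·q + d·h + (k₁/√(k₁²+k₂²))·a` is constant and `⟪h, u⟫ = d`. -/
theorem sigma_const_implies_h_slant (q h a : ℝ → E3) (k₁ k₂ : ℝ → ℝ)
    (hF : FrenetRuled q h a k₁ k₂)
    (hkk : ∀ s, k₁ s ^ 2 + k₂ s ^ 2 ≠ 0) (d : ℝ)
    (hd : ∀ s, k₁ s ^ 2 / (k₁ s ^ 2 + k₂ s ^ 2) ^ ((3 : ℝ) / 2)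
        * deriv (fun t => k₂ t / k₁ t) s = d) :
    (∀ s, deriv (fun t =>
        (k₂ t / Real.sqrt (k₁ t ^ 2 + k₂ t ^ 2)) • q t + d • h t
          + (k₁ t / Real.sqrt (k₁ t ^ 2 + k₂ t ^ 2)) • a t) s = 0) ∧
      (∀ s, ⟪h s, (k₂ s / Real.sqrt (k₁ s ^ 2 + k₂ s ^ 2)) • q s + d • h s
          + (k₁ s / Real.sqrt (k₁ s ^ 2 + k₂ s ^ 2)) • a s⟫ = d) := by
  
  have dk1 : Differentiable ℝ k₁ := hF.smooth_k₁.differentiable (by simp)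
  have dk2 : Differentiable ℝ k₂ := hF.smooth_k₂.differentiable (by simp)
  have dq : Differentiable ℝ q := hF.smooth_q.differentiable (by simp)
  have dh : Differentiable ℝ h := hF.smooth_h.differentiable (by simp)
  have da : Differentiable ℝ a := hF.smooth_a.differentiable (by simp)
  have hN : ∀ s, 0 < k₁ s ^ 2 + k₂ s ^ 2 := fun s =>
    lt_of_le_of_ne (by positivity) (Ne.symm (hkk s))
  have hR : ∀ s, 0 < Real.sqrt (k₁ s ^ 2 + k₂ s ^ 2) := fun s => Real.sqrt_pos.mpr (hN s)
  have hRsq : ∀ s, Real.sqrt (k₁ s ^ 2 + k₂ s ^ 2) ^ 2 = k₁ s ^ 2 + k₂ s ^ 2 :=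
    fun s => Real.sq_sqrt (hN s).le
  have hpow : ∀ s, (k₁ s ^ 2 + k₂ s ^ 2) ^ ((3:ℝ)/2)
      = Real.sqrt (k₁ s ^ 2 + k₂ s ^ 2) ^ 3 := by
    intro s
    rw [Real.sqrt_eq_rpow, ← Real.rpow_natCast ((k₁ s ^ 2 + k₂ s ^ 2) ^ ((1:ℝ)/2)) 3,
      ← Real.rpow_mul (hN s).le]
    norm_num
  set U : Set ℝ := {s | k₁ s ≠ 0} with hU
  have keyU : Set.EqOn (fun s => k₁ s * deriv k₂ s - deriv k₁ s * k₂ s)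
      (fun s => d * Real.sqrt (k₁ s ^ 2 + k₂ s ^ 2) ^ 3) U := by
    intro s hs
    have hA : k₁ s ≠ 0 := hs
    have hds := hd s
    rw [show (fun t => k₂ t / k₁ t) = k₂ / k₁ from rfl, deriv_div (dk2 s) (dk1 s) hA, hpow s] at hds
    have hR3 : Real.sqrt (k₁ s ^ 2 + k₂ s ^ 2) ^ 3 ≠ 0 := pow_ne_zero _ (hR s).ne'
    field_simp at hds
    have h2 : k₁ s ^ 2 * (deriv k₂ s * k₁ s - k₂ s * deriv k₁ s)
        = k₁ s ^ 2 * (d * Real.sqrt (k₁ s ^ 2 + k₂ s ^ 2) ^ 3) := by linear_combination k₁ s ^ 2 * hds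
    have h3 := mul_left_cancel₀ (pow_ne_zero 2 hA) h2
    simp only []
    linear_combination h3
  have contP : Continuous (fun s => k₁ s * deriv k₂ s - deriv k₁ s * k₂ s) :=
    (hF.smooth_k₁.continuous.mul (hF.smooth_k₂.continuous_deriv (by simp))).sub
      ((hF.smooth_k₁.continuous_deriv (by simp)).mul hF.smooth_k₂.continuous)
  have contQ : Continuous (fun s => d * Real.sqrt (k₁ s ^ 2 + k₂ s ^ 2) ^ 3) :=
    continuous_const.mul ((Real.continuous_sqrt.comp ((hF.smooth_k₁.continuous.pow 2).add (hF.smooth_k₂.continuous.pow 2))).pow 3)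
  have key : ∀ s, k₁ s * deriv k₂ s - deriv k₁ s * k₂ s
      = d * Real.sqrt (k₁ s ^ 2 + k₂ s ^ 2) ^ 3 := by
    intro s
    by_cases hs : s ∈ closure U
    · exact keyU.closure contP contQ hs
    · have hmem : s ∈ interior Uᶜ := by rwa [interior_compl, Set.mem_compl_iff]
      have hnhds : Uᶜ ∈ nhds s := mem_interior_iff_mem_nhds.mp hmem
      have hk0 : k₁ =ᶠ[nhds s] fun _ => (0:ℝ) := by
        filter_upwards [hnhds] with t ht
        simpa [hU] using ht
      have hA : k₁ s = 0 := hk0.eq_of_nhds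
      have hA' : deriv k₁ s = 0 := by rw [hk0.deriv_eq, deriv_const]
      have hd0 : d = 0 := by
        have := hd s
        rw [hA] at this
        simpa using this.symm
      simp [hA, hA', hd0]
  have main : ∀ s, HasDerivAt (fun t =>
      (k₂ t / Real.sqrt (k₁ t ^ 2 + k₂ t ^ 2)) • q t + d • h t
        + (k₁ t / Real.sqrt (k₁ t ^ 2 + k₂ t ^ 2)) • a t) 0 s := by
    intro s
    have hq : HasDerivAt q (k₁ s • h s) s := by
      have := (dq s).hasDerivAt
      rwa [hF.frenet_q s] at this
    have hh : HasDerivAt h (-(k₁ s) • q s + k₂ s • a s) s := by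
      have := (dh s).hasDerivAt
      rwa [hF.frenet_h s] at this
    have ha : HasDerivAt a (-(k₂ s) • h s) s := by
      have := (da s).hasDerivAt
      rwa [hF.frenet_a s] at this
    have hNd : HasDerivAt (fun t => k₁ t ^ 2 + k₂ t ^ 2)
        (2 * k₁ s * deriv k₁ s + 2 * k₂ s * deriv k₂ s) s := by
      have h1 := (dk1 s).hasDerivAt.pow 2
      have h2 := (dk2 s).hasDerivAt.pow 2
      have h3 := h1.add h2
      convert h3 using 1
      any_goals rfl
      push_cast
      ring
    have hRd : HasDerivAt (fun t => Real.sqrt (k₁ t ^ 2 + k₂ t ^ 2))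
        ((2 * k₁ s * deriv k₁ s + 2 * k₂ s * deriv k₂ s)
          / (2 * Real.sqrt (k₁ s ^ 2 + k₂ s ^ 2))) s :=
      hNd.sqrt (hN s).ne'
    have hfd : HasDerivAt (fun t => k₂ t / Real.sqrt (k₁ t ^ 2 + k₂ t ^ 2)) (d * k₁ s) s := by
      have h1 := (dk2 s).hasDerivAt.div hRd (hR s).ne'
      convert h1 using 1
      any_goals rfl
      have hkey := key s
      have hrsq := hRsq s
      have hr0 : Real.sqrt (k₁ s ^ 2 + k₂ s ^ 2) ≠ 0 := (hR s).ne'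
      have e2 : (deriv k₂ s * Real.sqrt (k₁ s ^ 2 + k₂ s ^ 2) - k₂ s *
            ((2 * k₁ s * deriv k₁ s + 2 * k₂ s * deriv k₂ s)
              / (2 * Real.sqrt (k₁ s ^ 2 + k₂ s ^ 2)))) / Real.sqrt (k₁ s ^ 2 + k₂ s ^ 2) ^ 2
          = (deriv k₂ s * Real.sqrt (k₁ s ^ 2 + k₂ s ^ 2) ^ 2
              - k₂ s * (k₁ s * deriv k₁ s + k₂ s * deriv k₂ s))
            / Real.sqrt (k₁ s ^ 2 + k₂ s ^ 2) ^ 3 := by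
        rw [div_eq_div_iff (pow_ne_zero 2 hr0) (pow_ne_zero 3 hr0)]
        field_simp
      rw [e2, eq_div_iff (pow_ne_zero 3 hr0)]
      linear_combination (-(k₁ s)) * hkey + (-(deriv k₂ s)) * hrsq
    have hgd : HasDerivAt (fun t => k₁ t / Real.sqrt (k₁ t ^ 2 + k₂ t ^ 2)) (-(d * k₂ s)) s := by
      have h1 := (dk1 s).hasDerivAt.div hRd (hR s).ne'
      convert h1 using 1
      any_goals rfl
      have hkey := key s
      have hrsq := hRsq s
      have hr0 : Real.sqrt (k₁ s ^ 2 + k₂ s ^ 2) ≠ 0 := (hR s).ne'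
      have e2 : (deriv k₁ s * Real.sqrt (k₁ s ^ 2 + k₂ s ^ 2) - k₁ s *
            ((2 * k₁ s * deriv k₁ s + 2 * k₂ s * deriv k₂ s)
              / (2 * Real.sqrt (k₁ s ^ 2 + k₂ s ^ 2)))) / Real.sqrt (k₁ s ^ 2 + k₂ s ^ 2) ^ 2
          = (deriv k₁ s * Real.sqrt (k₁ s ^ 2 + k₂ s ^ 2) ^ 2
              - k₁ s * (k₁ s * deriv k₁ s + k₂ s * deriv k₂ s))
            / Real.sqrt (k₁ s ^ 2 + k₂ s ^ 2) ^ 3 := by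
        rw [div_eq_div_iff (pow_ne_zero 2 hr0) (pow_ne_zero 3 hr0)]
        field_simp
      rw [e2, eq_div_iff (pow_ne_zero 3 hr0)]
      linear_combination k₂ s * hkey + (-(deriv k₁ s)) * hrsq
    have H := ((hfd.smul hq).add (hh.const_smul d)).add (hgd.smul ha)
    convert H using 1
    any_goals rfl
    have hr0 : Real.sqrt (k₁ s ^ 2 + k₂ s ^ 2) ≠ 0 := (hR s).ne'
    simp only [smul_add, smul_smul, smul_neg, neg_smul]
    module
  refine ⟨fun s => (main s).deriv, fun s => ?_⟩
  have h1 : ⟪h s, q s⟫ = 0 := by rw [real_inner_comm]; exact hF.inner_qh s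
  have h2 : ⟪h s, h s⟫ = 1 := by
    rw [real_inner_self_eq_norm_sq, hF.norm_h s]; norm_num
  simp [inner_add_right, inner_smul_right, h1, h2, hF.inner_ha s, hF.norm_h s]
end
end

section
/- Let q, h, a : ℝ → ℝ³ be smooth unit vector fields forming an orthonormal frame with a = q × h, satisfying q' = k₁·h, h' = -k₁·q + k₂·a, a' = -k₂·h for smooth k₁, k₂. If there is a nonzero constant vector u making a constant angle with a (i.e., ⟪a s, u⟫ constant), then u also makes a constant angle with q (i.e., ⟪q s, u⟫ is constant), and conversely. -/
open scoped RealInnerProductSpace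

noncomputable section

/-- a ruled surface is a-slant iff it is q-slant (same fixed direction `u`). -/
theorem a_slant_iff_q_slant (q h a : ℝ → E3) (k₁ k₂ : ℝ → ℝ)
    (hF : FrenetRuled q h a k₁ k₂)
    (hcross : ∀ s, (a s : Fin 3 → ℝ) = crossProduct (q s : Fin 3 → ℝ) (h s : Fin 3 → ℝ))
    (hk₁ : ∀ s, k₁ s ≠ 0) (hk₂ : ∀ s, k₂ s ≠ 0)
    (u : E3) (hu : u ≠ 0) :
    (∃ c : ℝ, ∀ s, ⟪a s, u⟫ = c) ↔ (∃ c : ℝ, ∀ s, ⟪q s, u⟫ = c) := by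

  -- derivative helper
  have key : ∀ (v : ℝ → E3), ContDiff ℝ (⊤ : ℕ∞) v →
      ∀ s, HasDerivAt (fun s => ⟪v s, u⟫) (⟪deriv v s, u⟫) s := by
    intro v hv s
    have h1 : HasDerivAt v (deriv v s) s :=
      ((hv.differentiable (by simp)) s).hasDerivAt
    have := h1.inner ℝ (hasDerivAt_const s u)
    simpa using this
  constructor
  · rintro ⟨c, hc⟩
    have hh : ∀ s, ⟪h s, u⟫ = 0 := by
      intro s
      have h1 := key a hF.smooth_a s
      have h2 : HasDerivAt (fun _ : ℝ => c) (0 : ℝ) s := hasDerivAt_const s c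
      have heq : (fun s => ⟪a s, u⟫) = fun _ : ℝ => c := funext hc
      rw [heq] at h1
      have h3 : ⟪deriv a s, u⟫ = 0 := h1.unique h2
      rw [hF.frenet_a s, real_inner_smul_left] at h3
      rcases mul_eq_zero.mp h3 with h4 | h4
      · exact absurd (neg_eq_zero.mp h4) (hk₂ s)
      · exact h4
    refine ⟨⟪q 0, u⟫, fun s => ?_⟩
    have hd : ∀ t, HasDerivAt (fun s => ⟪q s, u⟫) 0 t := by
      intro t
      have h1 := key q hF.smooth_q t
      rw [hF.frenet_q t, real_inner_smul_left, hh t, mul_zero] at h1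
      exact h1
    exact is_const_of_deriv_eq_zero (fun t => (hd t).differentiableAt)
      (fun t => (hd t).deriv) s 0
  · rintro ⟨c, hc⟩
    have hh : ∀ s, ⟪h s, u⟫ = 0 := by
      intro s
      have h1 := key q hF.smooth_q s
      have h2 : HasDerivAt (fun _ : ℝ => c) (0 : ℝ) s := hasDerivAt_const s c
      have heq : (fun s => ⟪q s, u⟫) = fun _ : ℝ => c := funext hc
      rw [heq] at h1
      have h3 : ⟪deriv q s, u⟫ = 0 := h1.unique h2
      rw [hF.frenet_q s, real_inner_smul_left] at h3
      rcases mul_eq_zero.mp h3 with h4 | h4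
      · exact absurd h4 (hk₁ s)
      · exact h4
    refine ⟨⟪a 0, u⟫, fun s => ?_⟩
    have hd : ∀ t, HasDerivAt (fun s => ⟪a s, u⟫) 0 t := by
      intro t
      have h1 := key a hF.smooth_a t
      rw [hF.frenet_a t, real_inner_smul_left, hh t, mul_zero] at h1
      exact h1
    exact is_const_of_deriv_eq_zero (fun t => (hd t).differentiableAt)
      (fun t => (hd t).deriv) s 0
end
end

section
/- Let q, h, a : ℝ → ℝ³ satisfy the Frenet equations q' = k₁·h, h' = -k₁·q + k₂·a, a' = -k₂·h with {q,h,a} orthonormal. Suppose u is a constant unit vector with ⟪q s, u⟫ = cos θ for all s, where θ is a constant with sin θ ≠ 0. Then ⟪h s, u⟫ = 0 and ⟪a s, u⟫ = ± sin θ for all s; in particular u = (cos θ)·q(s) + (± sin θ)·a(s) for all s. -/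
open scoped RealInnerProductSpace

noncomputable section

set_option maxHeartbeats 1000000 in
/-- for a q-slant ruled surface the fixed unit direction `u` satisfies
`⟪h, u⟫ = 0`, `⟪a, u⟫ = ± sin θ`, and `u = cos θ·q ± sin θ·a`. -/
theorem q_slant_axis_in_qa_plane (q h a : ℝ → E3) (k₁ k₂ : ℝ → ℝ)
    (hF : FrenetRuled q h a k₁ k₂) (hk₁ : ∀ s, k₁ s ≠ 0)
    (u : E3) (hu : ‖u‖ = 1) (θ : ℝ) (hsin : Real.sin θ ≠ 0)
    (hqu : ∀ s, ⟪q s, u⟫ = Real.cos θ) :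
    ∃ ε : ℝ, (ε = 1 ∨ ε = -1) ∧
      (∀ s, ⟪h s, u⟫ = 0) ∧
      (∀ s, ⟪a s, u⟫ = ε * Real.sin θ) ∧
      (∀ s, u = Real.cos θ • q s + (ε * Real.sin θ) • a s) := by
  -- derivatives of the frame
  have hq' : ∀ s, HasDerivAt q (k₁ s • h s) s := fun s => by
    have := ((hF.smooth_q.differentiable (by simp)) s).hasDerivAt
    rwa [hF.frenet_q s] at this
  have ha' : ∀ s, HasDerivAt a (-(k₂ s) • h s) s := fun s => by
    have := ((hF.smooth_a.differentiable (by simp)) s).hasDerivAt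
    rwa [hF.frenet_a s] at this
  -- ⟪h s, u⟫ = 0
  have hhu : ∀ s, ⟪h s, u⟫ = 0 := by
    intro s
    have d1 : HasDerivAt (fun t => ⟪q t, u⟫) (⟪q s, (0 : E3)⟫ + ⟪k₁ s • h s, u⟫) s :=
      (hq' s).inner ℝ (hasDerivAt_const s u)
    have d2 : HasDerivAt (fun t => ⟪q t, u⟫) 0 s := by
      have : (fun t => ⟪q t, u⟫) = fun _ => Real.cos θ := funext hqu
      rw [this]; exact hasDerivAt_const s _
    have := d1.unique d2
    simp only [inner_zero_right, real_inner_smul_left, zero_add] at this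
    exact (mul_eq_zero.mp this).resolve_left (hk₁ s)
  -- g = ⟪a s, u⟫ is constant
  have hg' : ∀ s, HasDerivAt (fun t => ⟪a t, u⟫) 0 s := by
    intro s
    have d1 := (ha' s).inner ℝ (hasDerivAt_const s u)
    have e : ⟪a s, (0 : E3)⟫ + ⟪-(k₂ s) • h s, u⟫ = 0 := by
      rw [inner_zero_right, real_inner_smul_left, hhu s]; ring
    rwa [e] at d1
  have hgconst : ∀ s, ⟪a s, u⟫ = ⟪a 0, u⟫ := fun s =>
    is_const_of_deriv_eq_zero (fun t => (hg' t).differentiableAt)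
      (fun t => (hg' t).deriv) s 0
  -- orthonormal basis
  have hself : ∀ v : E3, ‖v‖ = 1 → ⟪v, v⟫ = 1 := by
    intro v hv
    rw [real_inner_self_eq_norm_sq, hv]; norm_num
  have horth : ∀ s, Orthonormal ℝ ![q s, h s, a s] := by
    intro s
    rw [orthonormal_iff_ite]
    intro i j
    fin_cases i <;> fin_cases j <;>
      simp only [Matrix.cons_val_zero, Matrix.cons_val_one, Matrix.head_cons,
        Matrix.cons_val_two, Matrix.tail_cons, Fin.mk_zero, Fin.mk_one, Fin.isValue,
        if_true, reduceIte] <;>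
      first
        | exact hself _ (hF.norm_q s)
        | exact hself _ (hF.norm_h s)
        | exact hself _ (hF.norm_a s)
        | exact hF.inner_qh s
        | exact hF.inner_qa s
        | exact hF.inner_ha s
        | (rw [real_inner_comm]; first
            | exact hF.inner_qh s | exact hF.inner_qa s | exact hF.inner_ha s)
  have hcard : Fintype.card (Fin 3) = Module.finrank ℝ E3 := by
    rw [Fintype.card_fin, finrank_euclideanSpace_fin]
  -- expansion of u in the frame
  have hexp : ∀ s, u = Real.cos θ • q s + ⟪a s, u⟫ • a s := by
    intro s
    refine InnerProductSpace.ext_inner_left_basis (basisOfOrthonormalOfCardEqFinrank (horth s) hcard)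
      fun i => ?_
    rw [coe_basisOfOrthonormalOfCardEqFinrank]
    fin_cases i <;>
      simp only [Fin.zero_eta, Fin.mk_one, Fin.reduceFinMk, Fin.isValue,
        Matrix.cons_val_zero, Matrix.cons_val_one, Matrix.head_cons,
        Matrix.cons_val_two, Matrix.tail_cons, inner_add_right, real_inner_smul_right]
    · rw [hqu s, hself _ (hF.norm_q s), hF.inner_qa s]; ring
    · have h1 : ⟪h s, q s⟫ = 0 := by rw [real_inner_comm]; exact hF.inner_qh s
      rw [h1, hF.inner_ha s, hhu s]; ring
    · have h1 : ⟪a s, q s⟫ = 0 := by rw [real_inner_comm]; exact hF.inner_qa s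
      rw [h1, hself _ (hF.norm_a s)]; ring
  -- norm computation
  have hsq : ⟪a 0, u⟫ ^ 2 = Real.sin θ ^ 2 := by
    have h1 : (1 : ℝ) = Real.cos θ ^ 2 + ⟪a 0, u⟫ ^ 2 := by
      have hs := hself u hu
      rw [hexp 0] at hs
      simp only [inner_add_left, inner_add_right, real_inner_smul_left,
        real_inner_smul_right] at hs
      have hqa0 : ⟪a 0, q 0⟫ = 0 := by rw [real_inner_comm]; exact hF.inner_qa 0
      rw [hself _ (hF.norm_q 0), hself _ (hF.norm_a 0), hqa0, hF.inner_qa 0] at hs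
      nlinarith [hs]
    have := Real.sin_sq_add_cos_sq θ
    nlinarith
  have hcases : ⟪a 0, u⟫ = Real.sin θ ∨ ⟪a 0, u⟫ = -Real.sin θ :=
    sq_eq_sq_iff_eq_or_eq_neg.mp hsq
  rcases hcases with hc | hc
  · refine ⟨1, Or.inl rfl, hhu, fun s => by rw [hgconst s, hc, one_mul], fun s => ?_⟩
    have := hexp s
    rw [hgconst s, hc] at this
    rw [one_mul]; exact this
  · refine ⟨-1, Or.inr rfl, hhu, fun s => by rw [hgconst s, hc, neg_one_mul], fun s => ?_⟩
    have := hexp s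
    rw [hgconst s, hc] at this
    rw [neg_one_mul]; exact this
end
end

section
/- Let q, h, a : ℝ → ℝ³ be a Frenet frame satisfying q' = k₁·h, h' = -k₁·q + k₂·a, a' = -k₂·h with k₁, k₂ smooth and nowhere zero, and suppose k₁/k₂ is constant. Then k₁·k₂' = k₂·k₁' identically, and q''' = (k₁''/k₁ − k₁² − k₂²)·q' − 3k₁·k₁'·q + 3k₂·k₁'·a. -/
open scoped RealInnerProductSpace

noncomputable section

/-- if `k₁/k₂` is constant then `k₁·k₂' = k₂·k₁'` and
`q''' = (k₁''/k₁ − k₁² − k₂²)·q' − 3k₁k₁'·q + 3k₂k₁'·a`. -/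
theorem q_slant_third_derivative_formula (q h a : ℝ → E3) (k₁ k₂ : ℝ → ℝ)
    (hF : FrenetRuled q h a k₁ k₂)
    (hk₁ : ∀ s, k₁ s ≠ 0) (hk₂ : ∀ s, k₂ s ≠ 0)
    (hratio : ∃ C : ℝ, ∀ s, k₁ s / k₂ s = C) :
    (∀ s, k₁ s * deriv k₂ s = k₂ s * deriv k₁ s) ∧
      ∀ s, deriv (deriv (deriv q)) s =
        (deriv (deriv k₁) s / k₁ s - k₁ s ^ 2 - k₂ s ^ 2) • deriv q s
          - (3 * k₁ s * deriv k₁ s) • q s + (3 * k₂ s * deriv k₁ s) • a s := by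
  obtain ⟨C, hC⟩ := hratio
  have hk : ∀ s, k₁ s = C * k₂ s := fun s => by
    have := hC s; field_simp [hk₂ s] at this; linarith
  have dh : Differentiable ℝ h := hF.smooth_h.differentiable (by simp)
  have dq : Differentiable ℝ q := hF.smooth_q.differentiable (by simp)
  have da : Differentiable ℝ a := hF.smooth_a.differentiable (by simp)
  have dk₁ : Differentiable ℝ k₁ := hF.smooth_k₁.differentiable (by simp)
  have dk₂ : Differentiable ℝ k₂ := hF.smooth_k₂.differentiable (by simp)
  have dk₁' : Differentiable ℝ (deriv k₁) :=
    ((contDiff_infty_iff_deriv.mp (hF.smooth_k₁.of_le (by simp))).2).differentiable (by simp)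
  have hderiv : ∀ s, deriv k₁ s = C * deriv k₂ s := by
    intro s
    have : k₁ = fun s => C * k₂ s := funext hk
    rw [this, deriv_const_mul _ (dk₂ s)]
  have part1 : ∀ s, k₁ s * deriv k₂ s = k₂ s * deriv k₁ s := fun s => by
    rw [hk s, hderiv s]; ring
  refine ⟨part1, ?_⟩
  -- second derivative
  have hd2 : ∀ s, HasDerivAt (deriv q)
      ((-(k₁ s * k₁ s)) • q s + deriv k₁ s • h s + (k₁ s * k₂ s) • a s) s := by
    intro s
    have h1 : HasDerivAt (fun t => k₁ t • h t) (k₁ s • deriv h s + deriv k₁ s • h s) s :=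
      (dk₁ s).hasDerivAt.smul (dh s).hasDerivAt
    have h2 : deriv q = fun t => k₁ t • h t := funext hF.frenet_q
    rw [h2]
    convert h1 using 1
    rw [hF.frenet_h s]
    module
  have hd2' : deriv (deriv q)
      = fun s => (-(k₁ s * k₁ s)) • q s + deriv k₁ s • h s + (k₁ s * k₂ s) • a s :=
    funext fun s => (hd2 s).deriv
  intro s
  have t1 : HasDerivAt (fun t => (-(k₁ t * k₁ t)) • q t)
      ((-(k₁ s * k₁ s)) • deriv q s + (-(deriv k₁ s * k₁ s + k₁ s * deriv k₁ s)) • q s) s :=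
    (((dk₁ s).hasDerivAt.mul (dk₁ s).hasDerivAt).neg).smul (dq s).hasDerivAt
  have t2 : HasDerivAt (fun t => deriv k₁ t • h t)
      (deriv k₁ s • deriv h s + deriv (deriv k₁) s • h s) s :=
    (dk₁' s).hasDerivAt.smul (dh s).hasDerivAt
  have t3 : HasDerivAt (fun t => (k₁ t * k₂ t) • a t)
      ((k₁ s * k₂ s) • deriv a s + (deriv k₁ s * k₂ s + k₁ s * deriv k₂ s) • a s) s :=
    ((dk₁ s).hasDerivAt.mul (dk₂ s).hasDerivAt).smul (da s).hasDerivAt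
  have hd3 : HasDerivAt (fun t => (-(k₁ t * k₁ t)) • q t + deriv k₁ t • h t + (k₁ t * k₂ t) • a t) _ s :=
    ((t1.add t2).add t3)
  rw [hd2']
  rw [hd3.deriv, hF.frenet_q s, hF.frenet_h s, hF.frenet_a s]
  have key := part1 s
  have hdiv : deriv (deriv k₁) s / k₁ s * k₁ s = deriv (deriv k₁) s :=
    div_mul_cancel₀ _ (hk₁ s)
  match_scalars
  · linear_combination -hdiv
  · ring
  · linear_combination key
end
end
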